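/- arXiv:2507.14348 — 2 statements merged into one kernel-verified Lean document; each statement's English description precedes it below -/
import Mathlib

section
/- Let μ be a finite Borel measure on [0,∞), let g : ℝ³ → ℝ be a Schwartz function with Fourier transform ĝ(p) = ∫_{ℝ³} g(x) e^{-ip·x} dx, and let α : ℝ → ℝ be continuous with compact support with Fourier transform α̂(ω) = ∫_ℝ α(t) e^{-iωt} dt. Then the iterated limit lim_{δ→0⁺} lim_{R→∞} ∫_{[0,∞)} ∫_{ℝ³} ĝ(p) · α̂(δR √(|p/R|² + s)) dp dμ(s) exists and equals α̂(0) · (∫_{ℝ³} ĝ(p) dp) · μ({0}), where each inner limit lim_{R→∞} exists for every fixed δ > 0 and equals μ({0}) · ∫_{ℝ³} ĝ(p) α̂(δ|p|) dp. -/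
open MeasureTheory Filter
open Real FourierTransform
open scoped Topology InnerProductSpace

/-- One-dimensional Fourier transform `f̂(ω) = ∫_ℝ f(t) e^{-iωt} dt` of a real function. -/
noncomputable def fourier1d (f : ℝ → ℝ) (ω : ℝ) : ℂ :=
  ∫ t : ℝ, (f t : ℂ) * Complex.exp (-(Complex.I * ω * t))

/-- Three-dimensional Fourier transform `ĝ(p) = ∫_{ℝ³} g(x) e^{-ip·x} dx`. -/
noncomputable def fourier3d (g : EuclideanSpace ℝ (Fin 3) → ℝ)
    (p : EuclideanSpace ℝ (Fin 3)) : ℂ :=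
  ∫ x : EuclideanSpace ℝ (Fin 3), (g x : ℂ) * Complex.exp (-(Complex.I * (⟪p, x⟫_ℝ : ℝ)))

lemma fourier1d_eq (f : ℝ → ℝ) (ω : ℝ) :
    fourier1d f ω = 𝓕 (fun t => (f t : ℂ)) (ω / (2 * π)) := by
  rw [Real.fourier_real_eq_integral_exp_smul, fourier1d]
  congr 1
  ext t
  rw [smul_eq_mul, mul_comm]
  congr 2
  have : -2 * π * t * (ω / (2 * π)) = -(ω * t) := by
    field_simp
  rw [this]
  push_cast
  ring

lemma fourier3d_eq (g : EuclideanSpace ℝ (Fin 3) → ℝ) (p : EuclideanSpace ℝ (Fin 3)) :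
    fourier3d g p = 𝓕 (fun x => (g x : ℂ)) ((2 * π)⁻¹ • p) := by
  rw [Real.fourier_eq', fourier3d]
  congr 1
  ext x
  rw [smul_eq_mul, mul_comm]
  congr 2
  rw [real_inner_smul_right]
  have : -2 * π * ((2 * π)⁻¹ * ⟪x, p⟫_ℝ) = -⟪x, p⟫_ℝ := by
    field_simp
  rw [this, real_inner_comm]
  push_cast
  ring

lemma fourier1d_norm_le (α : ℝ → ℝ) (ω : ℝ) :
    ‖fourier1d α ω‖ ≤ ∫ t, |α t| := by
  refine (norm_integral_le_integral_norm _).trans_eq ?_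
  congr 1
  ext t
  rw [norm_mul]
  have h1 : ‖Complex.exp (-(Complex.I * ω * t))‖ = 1 := by
    rw [Complex.norm_exp]
    simp
  rw [h1, mul_one, Complex.norm_real, Real.norm_eq_abs]

lemma fourier1d_tendsto_atTop (α : ℝ → ℝ) :
    Tendsto (fourier1d α) atTop (𝓝 0) := by
  have h2π : (0:ℝ) < 2 * π := by positivity
  have h1 : Tendsto (fun ω : ℝ => ω / (2 * π)) atTop atTop :=
    tendsto_id.atTop_div_const h2π
  have h2 := (Real.zero_at_infty_fourier (fun t => (α t : ℂ))).comp
    (h1.mono_right _root_.atTop_le_cocompact)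
  simpa [Function.comp_def, ← fourier1d_eq] using h2

lemma fourier1d_continuous (α : ℝ → ℝ) (hαc : Continuous α) (hαs : HasCompactSupport α) :
    Continuous (fourier1d α) := by
  have hint : Integrable (fun t => (α t : ℂ)) := by
    exact ((Complex.continuous_ofReal.comp hαc).integrable_of_hasCompactSupport
      (hαs.comp_left rfl))
  have hF : Continuous (𝓕 (fun t => (α t : ℂ))) :=
    VectorFourier.fourierIntegral_continuous Real.continuous_fourierChar
      (by exact continuous_inner) hint
  have := hF.comp (continuous_id.div_const (2 * π))
  simpa [Function.comp_def, ← fourier1d_eq] using this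

noncomputable def SchwartzMap.complexify {V : Type*} [NormedAddCommGroup V]
    [InnerProductSpace ℝ V] (g : SchwartzMap V ℝ) : SchwartzMap V ℂ :=
  SchwartzMap.bilinLeftCLM (ContinuousLinearMap.lsmul ℝ ℝ : ℝ →L[ℝ] ℂ →L[ℝ] ℂ)
    (Function.HasTemperateGrowth.const (1 : ℂ)) g

lemma SchwartzMap.complexify_apply {V : Type*} [NormedAddCommGroup V]
    [InnerProductSpace ℝ V] (g : SchwartzMap V ℝ) (x : V) :
    g.complexify x = (g x : ℂ) := by
  show (ContinuousLinearMap.lsmul ℝ ℝ (g x)) (1:ℂ) = _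
  simp [Complex.real_smul]

lemma fourier3d_eq' (g : SchwartzMap (EuclideanSpace ℝ (Fin 3)) ℝ) :
    fourier3d g = fun p => 𝓕 (⇑g.complexify) ((2 * π)⁻¹ • p) := by
  funext p
  rw [fourier3d_eq]
  congr 1
  exact congrArg (fun f : EuclideanSpace ℝ (Fin 3) → ℂ => 𝓕 f ((2 * π)⁻¹ • p)) (funext fun x => (SchwartzMap.complexify_apply g x).symm)

lemma fourier3d_integrable (g : SchwartzMap (EuclideanSpace ℝ (Fin 3)) ℝ) :
    Integrable (fourier3d g) := by
  rw [fourier3d_eq']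
  have h : Integrable (𝓕 (⇑g.complexify)) := by
    have h2 : Integrable (⇑(SchwartzMap.fourierTransformCLM ℂ g.complexify)) volume :=
      (SchwartzMap.fourierTransformCLM ℂ g.complexify).integrable
    exact h2
  have h2π : ((2 * π)⁻¹ : ℝ) ≠ 0 := by positivity
  exact h.comp_smul h2π

lemma fourier3d_continuous (g : SchwartzMap (EuclideanSpace ℝ (Fin 3)) ℝ) :
    Continuous (fourier3d g) := by
  rw [fourier3d_eq']
  have h : Continuous (𝓕 (⇑g.complexify)) :=
    (SchwartzMap.fourierTransformCLM ℂ g.complexify).continuous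
  exact h.comp (continuous_const_smul _)

/-- The spontaneous-symmetry-breaking smearing condition at zero temperature: for a finite
Borel measure `μ` on `[0,∞)`, a Schwartz spatial smearing function `g` with Fourier transform
`ĝ`, and a continuous compactly supported temporal smearing function `α` with Fourier
transform `α̂`, the inner limit
`lim_{R→∞} ∫_{[0,∞)} ∫_{ℝ³} ĝ(p) α̂(δR√(|p/R|² + s)) dp dμ(s)` exists for every fixed
`δ > 0` and equals `μ({0}) · ∫ ĝ(p) α̂(δ|p|) dp`, and the iterated limit as `δ → 0⁺`
exists and equals `α̂(0) · (∫ ĝ(p) dp) · μ({0})`. -/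
theorem ssb_smearing_iterated_limit
    (μ : Measure ℝ) [IsFiniteMeasure μ] (hμ : μ (Set.Iio 0) = 0)
    (g : SchwartzMap (EuclideanSpace ℝ (Fin 3)) ℝ)
    (α : ℝ → ℝ) (hαc : Continuous α) (hαs : HasCompactSupport α) :
    (∀ δ : ℝ, 0 < δ →
      Tendsto (fun R : ℝ => ∫ s, (∫ p : EuclideanSpace ℝ (Fin 3),
          fourier3d g p *
            fourier1d α (δ * R * Real.sqrt (‖(R⁻¹ • p : EuclideanSpace ℝ (Fin 3))‖ ^ 2 + s))) ∂μ)
        atTop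
        (𝓝 ((μ {0}).toReal •
          ∫ p : EuclideanSpace ℝ (Fin 3), fourier3d g p * fourier1d α (δ * ‖p‖)))) ∧
    Tendsto (fun δ : ℝ => (μ {0}).toReal •
        ∫ p : EuclideanSpace ℝ (Fin 3), fourier3d g p * fourier1d α (δ * ‖p‖))
      (𝓝[>] 0)
      (𝓝 ((μ {0}).toReal •
        (fourier1d α 0 * ∫ p : EuclideanSpace ℝ (Fin 3), fourier3d g p))) := by
  set V := EuclideanSpace ℝ (Fin 3) with hV
  set F : V → ℂ := fourier3d g with hF
  set A : ℝ → ℂ := fourier1d α with hA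
  have hFint : Integrable F := fourier3d_integrable g
  have hFcont : Continuous F := fourier3d_continuous g
  have hAcont : Continuous A := fourier1d_continuous α hαc hαs
  set C : ℝ := ∫ t, |α t| with hC
  have hAb : ∀ ω, ‖A ω‖ ≤ C := fourier1d_norm_le α
  have hA0 : Tendsto A atTop (𝓝 0) := fourier1d_tendsto_atTop α
  have hbound_int : Integrable (fun p : V => ‖F p‖ * C) := hFint.norm.mul_const C
  have hmulbound : ∀ (ω : ℝ) (p : V), ‖F p * A ω‖ ≤ ‖F p‖ * C := by
    intro ω p
    rw [norm_mul]
    exact mul_le_mul_of_nonneg_left (hAb ω) (norm_nonneg _)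
  constructor
  · intro δ hδ
    set T : ℂ := ∫ p : V, F p * A (δ * ‖p‖) with hT
    have hcont_s : ∀ (R : ℝ) (p : V),
        Continuous fun s : ℝ => δ * R * Real.sqrt (‖(R⁻¹ • p : V)‖ ^ 2 + s) :=
      fun R p => continuous_const.mul
        (Real.continuous_sqrt.comp (continuous_const.add continuous_id))
    have hcont_p : ∀ (R s : ℝ),
        Continuous fun p : V => δ * R * Real.sqrt (‖(R⁻¹ • p : V)‖ ^ 2 + s) :=
      fun R s => continuous_const.mul (Real.continuous_sqrt.comp
        ((((continuous_const_smul _).norm).pow 2).add continuous_const))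
    have hΦmeas : ∀ R : ℝ, AEStronglyMeasurable (fun s => ∫ p : V,
        F p * A (δ * R * Real.sqrt (‖(R⁻¹ • p : V)‖ ^ 2 + s))) μ := by
      intro R
      apply Continuous.aestronglyMeasurable
      apply continuous_of_dominated (bound := fun p : V => ‖F p‖ * C)
      · exact fun s => (hFcont.mul (hAcont.comp (hcont_p R s))).aestronglyMeasurable
      · exact fun s => Eventually.of_forall fun p => hmulbound _ p
      · exact hbound_int
      · exact Eventually.of_forall fun p =>
          continuous_const.mul (hAcont.comp (hcont_s R p))
    have key := tendsto_integral_filter_of_dominated_convergence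
      (μ := μ) (l := atTop) (F := fun R s => ∫ p : V,
        F p * A (δ * R * Real.sqrt (‖(R⁻¹ • p : V)‖ ^ 2 + s)))
      (f := Set.indicator {0} fun _ => T)
      (bound := fun _ => (∫ p : V, ‖F p‖) * C)
      (Eventually.of_forall hΦmeas)
      ?_ (integrable_const _) ?_
    · rwa [integral_indicator_const _ (measurableSet_singleton 0)] at key
    · refine Eventually.of_forall fun R => Eventually.of_forall fun s => ?_
      refine (norm_integral_le_of_norm_le hbound_int
        (Eventually.of_forall fun p => hmulbound _ p)).trans ?_
      rw [integral_mul_const]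
    · have hae : ∀ᵐ s ∂μ, 0 ≤ s := by
        rw [ae_iff]
        convert hμ using 2
        ext a
        simp [not_le]
      filter_upwards [hae] with s hs
      rcases eq_or_lt_of_le hs with h0 | hpos
      · rw [← h0, Set.indicator_of_mem (Set.mem_singleton 0)]
        refine Tendsto.congr' ?_ tendsto_const_nhds
        filter_upwards [eventually_gt_atTop (0:ℝ)] with R hR
        rw [hT]
        refine integral_congr_ae (Eventually.of_forall fun p => ?_)
        have harg : δ * R * Real.sqrt (‖(R⁻¹ • p : V)‖ ^ 2 + 0) = δ * ‖p‖ := by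
          rw [norm_smul, norm_inv, Real.norm_eq_abs, abs_of_pos hR, add_zero,
            Real.sqrt_sq (by positivity)]
          field_simp
        simp only [harg]
      · rw [Set.indicator_of_notMem (by simpa using hpos.ne')]
        have inner := tendsto_integral_filter_of_dominated_convergence
          (μ := (volume : Measure V)) (l := atTop)
          (F := fun R p => F p * A (δ * R * Real.sqrt (‖(R⁻¹ • p : V)‖ ^ 2 + s)))
          (f := fun _ => (0 : ℂ))
          (bound := fun p : V => ‖F p‖ * C)
          (Eventually.of_forall fun R =>
            (hFcont.mul (hAcont.comp (hcont_p R s))).aestronglyMeasurable)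
          (Eventually.of_forall fun R => Eventually.of_forall fun p => hmulbound _ p)
          hbound_int ?_
        · simpa using inner
        · refine Eventually.of_forall fun p => ?_
          have harg : Tendsto (fun R : ℝ =>
              δ * R * Real.sqrt (‖(R⁻¹ • p : V)‖ ^ 2 + s)) atTop atTop := by
            refine tendsto_atTop_mono' atTop ?_
              (Tendsto.const_mul_atTop (by positivity : (0:ℝ) < δ * Real.sqrt s) tendsto_id)
            filter_upwards [eventually_ge_atTop (0:ℝ)] with R hR
            calc δ * Real.sqrt s * R = δ * R * Real.sqrt s := by ring
              _ ≤ δ * R * Real.sqrt (‖(R⁻¹ • p : V)‖ ^ 2 + s) := by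
                  refine mul_le_mul_of_nonneg_left
                    (Real.sqrt_le_sqrt (le_add_of_nonneg_left (by positivity)))
                    (by positivity)
          simpa using tendsto_const_nhds.mul (hA0.comp harg)
  · have h2 : Tendsto (fun δ : ℝ => ∫ p : V, F p * A (δ * ‖p‖)) (𝓝[>] 0)
        (𝓝 (∫ p : V, F p * A 0)) := by
      refine tendsto_integral_filter_of_dominated_convergence
        (bound := fun p : V => ‖F p‖ * C)
        (Eventually.of_forall fun δ => (hFcont.mul (hAcont.comp
          (continuous_const.mul continuous_norm))).aestronglyMeasurable)
        (Eventually.of_forall fun δ => Eventually.of_forall fun p => hmulbound _ p)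
        hbound_int (Eventually.of_forall fun p => ?_)
      have hδp : Tendsto (fun δ : ℝ => δ * ‖p‖) (𝓝[>] 0) (𝓝 0) := by
        have := ((continuous_id.mul (continuous_const (y := ‖p‖))).tendsto 0).mono_left
          (nhdsWithin_le_nhds (s := Set.Ioi (0:ℝ)))
        simpa [Pi.mul_def] using this
      exact tendsto_const_nhds.mul ((hAcont.tendsto 0).comp hδp)
    have heq : ∫ p : V, F p * A 0 = A 0 * ∫ p : V, F p := by
      calc ∫ p : V, F p * A 0 = ∫ p : V, A 0 • F p := by
            simp_rw [smul_eq_mul, mul_comm]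
        _ = A 0 • ∫ p : V, F p := integral_smul _ _
        _ = A 0 * ∫ p : V, F p := smul_eq_mul _ _
    rw [heq] at h2
    exact h2.const_smul _
end

section
/- Let D : ℝ³ → ℝ be bounded and continuous with lim_{|x|→∞} D(x) = L, and let α : ℝ → ℝ be continuously differentiable, even, compactly supported, with ∫_ℝ α(t) dt = 1. Then lim_{λ→∞} ( −∫_{ℝ³} D(λx) · α'(|x|) / (2π|x|) dx ) = L. In particular, the order parameter defined by this scaling limit is nonzero if and only if the asymptotic value of the damping factor D is nonzero. -/
open MeasureTheory Filter Bornology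
open scoped Real Topology
open Set Metric

noncomputable abbrev E3 := EuclideanSpace ℝ (Fin 3)

lemma integrable_subtype_comap' {s : Set ℝ} (hs : MeasurableSet s) (g : ℝ → ℝ)
    (hg : IntegrableOn g s) :
    Integrable (fun y : s => g y) ((volume : Measure ℝ).comap Subtype.val) := by
  have := (MeasurableEmbedding.subtype_coe hs).integrable_map_iff
    (g := g) (μ := (volume : Measure ℝ).comap Subtype.val)
  rw [(MeasurableEmbedding.subtype_coe hs).map_comap volume, Subtype.range_coe] at this
  exact this.mp hg

lemma integrable_fun_norm3 (f : ℝ → ℝ) (hm : Measurable f)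
    (hf : IntegrableOn (fun y => y ^ 2 * f y) (Set.Ioi (0:ℝ))) :
    Integrable (fun x : E3 => f ‖x‖) := by
  have hdim : Module.finrank ℝ E3 = 3 := finrank_euclideanSpace_fin
  -- integrability w.r.t. volumeIoiPow 2
  have h2 : Integrable (fun y : Set.Ioi (0:ℝ) => f y) (Measure.volumeIoiPow 2) := by
    rw [Measure.volumeIoiPow, integrable_withDensity_iff (by fun_prop)
      (ae_of_all _ fun y => ENNReal.ofReal_lt_top)]
    have := integrable_subtype_comap' (measurableSet_Ioi (a := (0:ℝ))) (fun y => f y * y ^ 2) ?_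
    · refine this.congr (ae_of_all _ fun y => ?_)
      simp only []
      rw [ENNReal.toReal_ofReal (by positivity : (0:ℝ) ≤ (y:ℝ)^2)]
    · exact (hf.congr_fun (fun y hy => by ring) measurableSet_Ioi)
  -- integrability over the product
  have h3 : Integrable (fun p : (sphere (0:E3) 1) × (Set.Ioi (0:ℝ)) => f p.2)
      ((volume : Measure E3).toSphere.prod (Measure.volumeIoiPow 2)) := by
    have := (integrable_const (1:ℝ) (μ := (volume : Measure E3).toSphere)).mul_prod h2
    simpa using this
  -- transfer through the homeomorphism
  have h4 : Integrable (fun x : ({(0:E3)}ᶜ : Set E3) => f ‖(x:E3)‖)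
      ((volume : Measure E3).comap Subtype.val) := by
    have h5 := ((volume : Measure E3).measurePreserving_homeomorphUnitSphereProd).integrable_comp_emb
      (Homeomorph.measurableEmbedding _) (g := (fun p : (sphere (0:E3) 1) × (Set.Ioi (0:ℝ)) => f p.2))
    rw [hdim] at h5
    convert h5.mpr h3 using 1
    ext x; simp [homeomorphUnitSphereProd]
  -- transfer back to E3
  have h6 := (MeasurableEmbedding.subtype_coe (measurableSet_singleton (0:E3)).compl).integrable_map_iff
    (g := fun x : E3 => f ‖x‖) (μ := (volume : Measure E3).comap Subtype.val)
  rw [(MeasurableEmbedding.subtype_coe (measurableSet_singleton (0:E3)).compl).map_comap volume,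
    Subtype.range_coe, MeasureTheory.restrict_compl_singleton] at h6
  exact h6.mpr h4


lemma volume_ball3 : ((volume : Measure E3) (ball (0:E3) 1)).toReal = 4/3 * π := by
  rw [EuclideanSpace.volume_ball]
  have hc : (Fintype.card (Fin 3) : ℝ) = 3 := by simp
  rw [Fintype.card_fin]
  have hG : Real.Gamma ((3:ℝ)/2 + 1) = 3/4 * Real.sqrt π := by
    rw [Real.Gamma_add_one (by norm_num)]
    have : (3:ℝ)/2 = 1/2 + 1 := by norm_num
    rw [this, Real.Gamma_add_one (by norm_num), Real.Gamma_one_half_eq]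
    ring
  have hs : Real.sqrt π ≠ 0 := by positivity
  have hval : Real.sqrt π ^ 3 / Real.Gamma ((3:ℝ)/2 + 1) = 4/3 * π := by
    rw [hG]
    rw [show Real.sqrt π ^ 3 = Real.sqrt π ^ 2 * Real.sqrt π by ring,
      Real.sq_sqrt Real.pi_pos.le]
    field_simp
  push_cast
  rw [hval, ENNReal.ofReal_one, one_pow, one_mul, ENNReal.toReal_ofReal (by positivity)]

variable {α : ℝ → ℝ}

lemma half_integral (hα : Continuous α) (heven : ∀ t, α (-t) = α t)
    (hsupp : HasCompactSupport α) (hnorm : ∫ t : ℝ, α t = 1) :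
    ∫ t in Ioi (0:ℝ), α t = 1/2 := by
  have hint : Integrable α := hα.integrable_of_hasCompactSupport hsupp
  have hsym : ∫ t in Iic (0:ℝ), α t = ∫ t in Ioi (0:ℝ), α t := by
    have := integral_comp_neg_Ioi (c := (0:ℝ)) (f := α)
    simp only [neg_zero] at this
    rw [← this]
    exact setIntegral_congr_fun measurableSet_Ioi fun t _ => heven t
  have := intervalIntegral.integral_Iic_add_Ioi (b := (0:ℝ)) (f := α)
    hint.integrableOn hint.integrableOn
  rw [hnorm, hsym] at this
  linarith

lemma parts_integral (hα : ContDiff ℝ 1 α) (heven : ∀ t, α (-t) = α t)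
    (hsupp : HasCompactSupport α) (hnorm : ∫ t : ℝ, α t = 1) :
    ∫ y in Ioi (0:ℝ), y * deriv α y = -(1/2) := by
  have hcont : Continuous α := hα.continuous
  have hcd : Continuous (deriv α) := hα.continuous_deriv le_rfl
  have hint : Integrable α := hcont.integrable_of_hasCompactSupport hsupp
  have hint2 : Integrable (fun y => y * deriv α y) :=
    (continuous_id.mul hcd).integrable_of_hasCompactSupport
      (hsupp.deriv.mul_left)
  -- FTC on Ioi 0 for y ↦ y * α y
  obtain ⟨R, hR⟩ := hsupp.isBounded.subset_closedBall 0
  have hten : Tendsto (fun y : ℝ => y * α y) atTop (𝓝 0) := by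
    refine Tendsto.congr' ?_ tendsto_const_nhds
    filter_upwards [eventually_gt_atTop (max R 0)] with y hy
    have : α y = 0 := by
      apply image_eq_zero_of_notMem_tsupport
      intro hmem
      have := hR hmem
      rw [mem_closedBall_zero_iff] at this
      have : y ≤ R := le_trans (le_abs_self y) this
      exact absurd this (not_le.mpr (lt_of_le_of_lt (le_max_left R 0) hy))
    simp [this]
  have hder : ∀ x ∈ Ioi (0:ℝ), HasDerivAt (fun y => y * α y)
      (α x + x * deriv α x) x := by
    intro x _
    have h1 := (hasDerivAt_id x).fun_mul ((hα.differentiable one_ne_zero) x).hasDerivAt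
    simpa using h1
  have hfi : IntegrableOn (fun x => α x + x * deriv α x) (Ioi (0:ℝ)) :=
    (hint.add hint2).integrableOn
  have hFTC := integral_Ioi_of_hasDerivAt_of_tendsto
    ((continuous_id.mul hcont).continuousWithinAt) hder hfi hten
  simp only [Pi.mul_apply, id_eq, zero_mul, sub_zero] at hFTC
  rw [integral_add hint.integrableOn hint2.integrableOn,
    half_integral hcont heven hsupp hnorm] at hFTC
  linarith

lemma weight_integral (hα : ContDiff ℝ 1 α) (heven : ∀ t, α (-t) = α t)
    (hsupp : HasCompactSupport α) (hnorm : ∫ t : ℝ, α t = 1) :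
    ∫ x : E3, deriv α ‖x‖ / (2 * π * ‖x‖) = -1 := by
  have hmain := integral_fun_norm_addHaar (volume : Measure E3)
    (fun y => deriv α y / (2 * π * y))
  rw [finrank_euclideanSpace_fin] at hmain
  have hI : ∫ y in Ioi (0:ℝ), y ^ (3-1) • (deriv α y / (2 * π * y))
      = -(1/(4*π)) := by
    have hcongr : ∀ y ∈ Ioi (0:ℝ), y ^ (3-1) • (deriv α y / (2 * π * y))
        = (1/(2*π)) * (y * deriv α y) := by
      intro y hy
      have hy0 : y ≠ 0 := ne_of_gt hy
      have hπ : π ≠ 0 := Real.pi_ne_zero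
      simp only [smul_eq_mul]
      field_simp
      ring
    rw [setIntegral_congr_fun measurableSet_Ioi hcongr, integral_const_mul,
      parts_integral hα heven hsupp hnorm]
    have hπ : π ≠ 0 := Real.pi_ne_zero
    field_simp
    ring
  rw [hmain, hI, measureReal_def, volume_ball3]
  have hπ : π ≠ 0 := Real.pi_ne_zero
  simp only [nsmul_eq_mul, smul_eq_mul]
  field_simp
  norm_num


/-- Let `D : ℝ³ → ℝ` be bounded and continuous with `lim_{|x|→∞} D(x) = L`, and let
`α : ℝ → ℝ` be continuously differentiable, even, compactly supported, with `∫ α = 1`.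
Then `lim_{λ→∞} (−∫_{ℝ³} D(λx) α'(|x|) / (2π|x|) dx) = L`: the order parameter defined
by this scaling limit equals the asymptotic value of the damping factor. -/
theorem order_parameter_eq_asymptotic_damping
    (D : EuclideanSpace ℝ (Fin 3) → ℝ) (hDb : ∃ M : ℝ, ∀ x, |D x| ≤ M)
    (hDc : Continuous D) (L : ℝ)
    (hL : Tendsto D (cobounded (EuclideanSpace ℝ (Fin 3))) (𝓝 L))
    (α : ℝ → ℝ) (hα : ContDiff ℝ 1 α) (heven : ∀ t, α (-t) = α t)
    (hsupp : HasCompactSupport α) (hnorm : ∫ t : ℝ, α t = 1) :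
    Tendsto (fun lam : ℝ =>
        -∫ x : EuclideanSpace ℝ (Fin 3), D (lam • x) * deriv α ‖x‖ / (2 * π * ‖x‖))
      atTop (𝓝 L) := by
  obtain ⟨M, hM⟩ := hDb
  have hcd : Continuous (deriv α) := hα.continuous_deriv le_rfl
  set w : E3 → ℝ := fun x => deriv α ‖x‖ / (2 * π * ‖x‖) with hw
  have hwint : Integrable w := by
    apply integrable_fun_norm3 (fun y => deriv α y / (2 * π * y))
    · exact hcd.measurable.div (measurable_const.mul measurable_id)
    · have hbase : IntegrableOn (fun y => (1/(2*π)) * (y * deriv α y)) (Ioi (0:ℝ)) :=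
        (((continuous_id.mul hcd).integrable_of_hasCompactSupport
          hsupp.deriv.mul_left).const_mul _).integrableOn
      refine hbase.congr_fun (fun y hy => ?_) measurableSet_Ioi
      have hy0 : y ≠ 0 := ne_of_gt hy
      have hπ : π ≠ 0 := Real.pi_ne_zero
      field_simp
  have hbdint : Integrable (fun x : E3 => M * |w x|) := (hwint.abs.const_mul M)
  have h0 : ∀ᵐ (x : E3), x ≠ (0 : E3) := by
    rw [ae_iff]
    simp only [ne_eq, not_not]
    have : {x : E3 | x = 0} = {(0 : E3)} := by ext x; simp
    rw [this, measure_singleton]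
  have htend : Tendsto
      (fun lam : ℝ => ∫ x : E3, D (lam • x) * deriv α ‖x‖ / (2 * π * ‖x‖))
      atTop (𝓝 (∫ x : E3, L * w x)) := by
    refine tendsto_integral_filter_of_dominated_convergence (fun x => M * |w x|)
      ?_ ?_ hbdint ?_
    · filter_upwards with lam
      exact (((hDc.comp (continuous_id.const_smul lam)).mul
        (hcd.comp continuous_norm)).measurable.div
        ((continuous_const.mul continuous_norm)).measurable).aestronglyMeasurable
    · filter_upwards with lam
      filter_upwards with x
      have : ‖D (lam • x) * deriv α ‖x‖ / (2 * π * ‖x‖)‖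
          = |D (lam • x)| * |deriv α ‖x‖| / |2 * π * ‖x‖| := by
        rw [Real.norm_eq_abs, abs_div, abs_mul]
      rw [this, hw]
      have hwabs : |deriv α ‖x‖ / (2 * π * ‖x‖)| = |deriv α ‖x‖| / |2 * π * ‖x‖| :=
        abs_div _ _
      rw [hwabs, mul_div_assoc]
      gcongr
      exact hM _
    · filter_upwards [h0] with x hx
      have hxn : 0 < ‖x‖ := norm_pos_iff.mpr hx
      have hnorm_tend : Tendsto (fun lam : ℝ => ‖lam • x‖) atTop atTop := by
        have : (fun lam : ℝ => ‖lam • x‖) = fun lam : ℝ => |lam| * ‖x‖ := by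
          funext lam; rw [norm_smul, Real.norm_eq_abs]
        rw [this]
        exact (tendsto_abs_atTop_atTop).atTop_mul_const hxn
      have hDlim : Tendsto (fun lam : ℝ => D (lam • x)) atTop (𝓝 L) :=
        hL.comp (tendsto_norm_atTop_iff_cobounded.mp hnorm_tend)
      have := (hDlim.mul_const (deriv α ‖x‖)).div_const (2 * π * ‖x‖)
      simpa [hw, mul_div_assoc] using this
  have hval : ∫ x : E3, L * w x = -L := by
    rw [integral_const_mul, hw]
    rw [weight_integral hα heven hsupp hnorm]
    ring
  rw [hval] at htend
  simpa using htend.neg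
end
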